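/- arXiv:1708.07947 — 5 statements merged into one kernel-verified Lean document; each statement's English description precedes it below -/
import Mathlib

section
/- Let A1, A2, X1, X2 ∈ ℂ^{n×n}, B1, B2 ∈ ℂ^{n×m}, Y1, Y2 ∈ ℂ^{m×n}, F1, F2 ∈ ℂ^{n×n}. Suppose lift(A1,A2)·lift(X1,X2) + lift(B1,B2)·lift(Y1,Y2) = lift(X1,X2)·lift(F1,F2) and that lift(X1,X2) is invertible. Then there exist K1, K2 ∈ ℂ^{m×n} such that lift(K1,K2) = lift(Y1,Y2)·lift(X1,X2)⁻¹, and moreover lift(A1,A2) + lift(B1,B2)·lift(K1,K2) = lift(X1,X2)·lift(F1,F2)·lift(X1,X2)⁻¹; consequently the spectrum of lift(A1,A2) + lift(B1,B2)·lift(K1,K2) equals the spectrum of lift(F1,F2). -/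
open Matrix

/-- Entrywise complex conjugate of a complex matrix. -/
noncomputable def mconj {n m : Type*} (M : Matrix n m ℂ) : Matrix n m ℂ :=
  M.map (starRingEnd ℂ)

/-- The complex lifting `lift(M1,M2) = [[M1, M2^#],[M2, M1^#]]`. -/
noncomputable def clift {n m : Type*} (M1 M2 : Matrix n m ℂ) :
    Matrix (n ⊕ n) (m ⊕ m) ℂ :=
  Matrix.fromBlocks M1 (mconj M2) M2 (mconj M1)

/-- The "conjugate–swap" map. -/
noncomputable def csw {n m : Type*} (M : Matrix (n ⊕ n) (m ⊕ m) ℂ) :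
    Matrix (n ⊕ n) (m ⊕ m) ℂ :=
  (mconj M).submatrix (Equiv.sumComm n n) (Equiv.sumComm m m)

lemma csw_mul {n m k : Type*} [Fintype m] (M : Matrix (n ⊕ n) (m ⊕ m) ℂ)
    (N : Matrix (m ⊕ m) (k ⊕ k) ℂ) : csw (M * N) = csw M * csw N := by
  unfold csw mconj
  rw [Matrix.map_mul, Matrix.submatrix_mul_equiv]

lemma csw_one {n : Type*} [DecidableEq n] : csw (1 : Matrix (n ⊕ n) (n ⊕ n) ℂ) = 1 := by
  unfold csw mconj
  rw [Matrix.map_one _ (map_zero _) (map_one _), Matrix.submatrix_one_equiv]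

lemma csw_clift {n m : Type*} (M1 M2 : Matrix n m ℂ) : csw (clift M1 M2) = clift M1 M2 := by
  ext i j
  rcases i with i | i <;> rcases j with j | j <;>
    simp [csw, clift, mconj, Matrix.fromBlocks]

lemma clift_of_csw_fixed {n m : Type*} (M : Matrix (n ⊕ n) (m ⊕ m) ℂ) (h : csw M = M) :
    M = clift (Matrix.of fun i j => M (Sum.inl i) (Sum.inl j))
          (Matrix.of fun i j => M (Sum.inr i) (Sum.inl j)) := by
  ext i j
  rcases i with i | i <;> rcases j with j | j
  · rfl
  · have := congrFun (congrFun h (Sum.inl i)) (Sum.inr j)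
    simp only [csw, mconj, Matrix.submatrix_apply, Matrix.map_apply, Equiv.sumComm_apply,
      Sum.swap_inl, Sum.swap_inr] at this
    simp [clift, mconj, Matrix.fromBlocks, ← this]
  · rfl
  · have := congrFun (congrFun h (Sum.inr i)) (Sum.inr j)
    simp only [csw, mconj, Matrix.submatrix_apply, Matrix.map_apply, Equiv.sumComm_apply,
      Sum.swap_inl, Sum.swap_inr] at this
    simp [clift, mconj, Matrix.fromBlocks, ← this]

/-- a nonsingular solution of the generalized Sylvester bimatrix equation
yields a pole-assigning feedback gain bimatrix. -/
theorem stmt_1 {n m : ℕ}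
    (A1 A2 X1 X2 F1 F2 : Matrix (Fin n) (Fin n) ℂ)
    (B1 B2 : Matrix (Fin n) (Fin m) ℂ)
    (Y1 Y2 : Matrix (Fin m) (Fin n) ℂ)
    (heq : clift A1 A2 * clift X1 X2 + clift B1 B2 * clift Y1 Y2
      = clift X1 X2 * clift F1 F2)
    (hinv : IsUnit (clift X1 X2)) :
    ∃ K1 K2 : Matrix (Fin m) (Fin n) ℂ,
      clift K1 K2 = clift Y1 Y2 * (clift X1 X2)⁻¹ ∧
      clift A1 A2 + clift B1 B2 * clift K1 K2
        = clift X1 X2 * clift F1 F2 * (clift X1 X2)⁻¹ ∧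
      spectrum ℂ (clift A1 A2 + clift B1 B2 * clift K1 K2) = spectrum ℂ (clift F1 F2) := by
  set X := clift X1 X2 with hX
  have hXdet : IsUnit X.det := (Matrix.isUnit_iff_isUnit_det X).mp hinv
  have hXX : X * X⁻¹ = 1 := Matrix.mul_nonsing_inv X hXdet
  -- X⁻¹ is csw-fixed
  have hcswXinv : csw X⁻¹ = X⁻¹ := by
    have hcX : csw X = X := csw_clift X1 X2
    have h1 : X * csw X⁻¹ = 1 := by
      have h2 := congrArg csw hXX
      rw [csw_mul, csw_one, hcX] at h2
      exact h2
    exact (Matrix.inv_eq_right_inv h1).symm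
  set Z := clift Y1 Y2 * X⁻¹ with hZ
  have hcswZ : csw Z = Z := by rw [hZ, csw_mul, csw_clift, hcswXinv]
  obtain hKeq := clift_of_csw_fixed Z hcswZ
  refine ⟨_, _, hKeq.symm, ?_⟩
  have key : clift A1 A2 + clift B1 B2 * Z = X * clift F1 F2 * X⁻¹ := by
    have h2 : (clift A1 A2 * X + clift B1 B2 * clift Y1 Y2) * X⁻¹
        = X * clift F1 F2 * X⁻¹ := by rw [heq]
    rw [add_mul, mul_assoc (clift A1 A2), hXX, mul_one, Matrix.mul_assoc (clift B1 B2)] at h2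
    exact h2
  rw [← hKeq]
  refine ⟨key, ?_⟩
  rw [key]
  lift X to (Matrix (Fin n ⊕ Fin n) (Fin n ⊕ Fin n) ℂ)ˣ using hinv with u hu
  rw [← Matrix.coe_units_inv]
  exact spectrum.units_conjugate
end

section
/- Let A1, A2 ∈ ℂ^{n×n}, B1, B2 ∈ ℂ^{n×m}, and let N_{1i}, N_{2i} ∈ ℂ^{n×m} and D_{1i}, D_{2i} ∈ ℂ^{m×m} (i = 0,…,ω) be families of coefficient matrices satisfying, for all s ∈ ℂ, the lifted polynomial identity (s·I_{2n} - lift(A1,A2))·(Σ_{i=0}^{ω} lift(N_{1i},N_{2i})·s^i) = lift(B1,B2)·(Σ_{i=0}^{ω} lift(D_{1i},D_{2i})·s^i). Then for every p, every F1, F2 ∈ ℂ^{p×p} and every Z1, Z2 ∈ ℂ^{m×p}, the matrices 𝒳 := Σ_{i=0}^{ω} lift(N_{1i},N_{2i})·lift(Z1,Z2)·lift(F1,F2)^i and 𝒴 := Σ_{i=0}^{ω} lift(D_{1i},D_{2i})·lift(Z1,Z2)·lift(F1,F2)^i satisfy the generalized Sylvester equation lift(A1,A2)·𝒳 + lift(B1,B2)·𝒴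 = 𝒳·lift(F1,F2). -/
open Matrix Finset Polynomial

lemma coeff_extract (ω : ℕ) (a b c : ℕ → ℂ)
    (h : ∀ s : ℂ, (∑ i ∈ range (ω+1), s^(i+1) * a i) - ∑ i ∈ range (ω+1), s^i * b i
        = ∑ i ∈ range (ω+1), s^i * c i) (j : ℕ) :
    (∑ i ∈ range (ω+1), if i+1 = j then a i else 0)
      - (∑ i ∈ range (ω+1), if i = j then b i else 0)
    = ∑ i ∈ range (ω+1), if i = j then c i else 0 := by
  have hP : (∑ i ∈ range (ω+1), C (a i) * X^(i+1))
      - (∑ i ∈ range (ω+1), C (b i) * X^i)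
      = ∑ i ∈ range (ω+1), C (c i) * X^i := by
    apply Polynomial.funext
    intro s
    simp only [eval_sub, eval_finset_sum, eval_mul, eval_pow, eval_C, eval_X]
    simpa [mul_comm] using h s
  have h2 := congrArg (fun P => P.coeff j) hP
  simpa [Polynomial.finset_sum_coeff, coeff_C_mul, coeff_X_pow, mul_ite,
    eq_comm] using h2

/-- the formulas built from the right factorization solve the
generalized Sylvester bimatrix equation. -/
theorem stmt_2 {n m : ℕ} (ω : ℕ)
    (A1 A2 : Matrix (Fin n) (Fin n) ℂ) (B1 B2 : Matrix (Fin n) (Fin m) ℂ)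
    (N1 N2 : ℕ → Matrix (Fin n) (Fin m) ℂ) (D1 D2 : ℕ → Matrix (Fin m) (Fin m) ℂ)
    (hfac : ∀ s : ℂ,
      (s • (1 : Matrix (Fin n ⊕ Fin n) (Fin n ⊕ Fin n) ℂ) - clift A1 A2)
          * (∑ i ∈ range (ω + 1), s ^ i • clift (N1 i) (N2 i))
        = clift B1 B2 * (∑ i ∈ range (ω + 1), s ^ i • clift (D1 i) (D2 i)))
    {p : ℕ} (F1 F2 : Matrix (Fin p) (Fin p) ℂ) (Z1 Z2 : Matrix (Fin m) (Fin p) ℂ) :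
    clift A1 A2 * (∑ i ∈ range (ω + 1),
        clift (N1 i) (N2 i) * clift Z1 Z2 * (clift F1 F2) ^ i)
      + clift B1 B2 * (∑ i ∈ range (ω + 1),
        clift (D1 i) (D2 i) * clift Z1 Z2 * (clift F1 F2) ^ i)
    = (∑ i ∈ range (ω + 1),
        clift (N1 i) (N2 i) * clift Z1 Z2 * (clift F1 F2) ^ i) * clift F1 F2 := by
  set A := clift A1 A2
  set B := clift B1 B2
  set Nn : ℕ → Matrix (Fin n ⊕ Fin n) (Fin m ⊕ Fin m) ℂ := fun i => clift (N1 i) (N2 i) with hNn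
  set Dn : ℕ → Matrix (Fin m ⊕ Fin m) (Fin m ⊕ Fin m) ℂ := fun i => clift (D1 i) (D2 i) with hDn
  set Z := clift Z1 Z2
  set F := clift F1 F2
  -- entrywise coefficient identity
  have hentry : ∀ (k : Fin n ⊕ Fin n) (l : Fin m ⊕ Fin m) (j : ℕ),
      (∑ i ∈ range (ω+1), if i+1 = j then (Nn i) k l else 0)
        - (∑ i ∈ range (ω+1), if i = j then (A * Nn i) k l else 0)
      = ∑ i ∈ range (ω+1), if i = j then (B * Dn i) k l else 0 := by
    intro k l j
    apply coeff_extract ω _ _ _ _ j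
    intro s
    have h := hfac s
    have h' : (∑ i ∈ range (ω+1), s^(i+1) • Nn i)
        - (∑ i ∈ range (ω+1), s^i • (A * Nn i))
        = ∑ i ∈ range (ω+1), s^i • (B * Dn i) := by
      have hsub : (s • (1 : Matrix (Fin n ⊕ Fin n) (Fin n ⊕ Fin n) ℂ) - A)
              * (∑ i ∈ range (ω + 1), s ^ i • Nn i)
          = (∑ i ∈ range (ω+1), s^(i+1) • Nn i)
              - (∑ i ∈ range (ω+1), s^i • (A * Nn i)) := by
        rw [Matrix.sub_mul, Matrix.smul_mul, Matrix.one_mul, Finset.smul_sum,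
          Matrix.mul_sum]
        congr 1
        · exact Finset.sum_congr rfl fun i _ => by
            rw [smul_smul, pow_succ, mul_comm]
        · exact Finset.sum_congr rfl fun i _ => by
            rw [Matrix.mul_smul]
      calc (∑ i ∈ range (ω+1), s^(i+1) • Nn i)
          - (∑ i ∈ range (ω+1), s^i • (A * Nn i))
          = (s • (1 : Matrix (Fin n ⊕ Fin n) (Fin n ⊕ Fin n) ℂ) - A)
              * (∑ i ∈ range (ω + 1), s ^ i • Nn i) := hsub.symm
        _ = B * (∑ i ∈ range (ω + 1), s ^ i • Dn i) := h
        _ = ∑ i ∈ range (ω+1), s^i • (B * Dn i) := by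
            rw [Matrix.mul_sum]
            exact Finset.sum_congr rfl fun i _ => by rw [Matrix.mul_smul]
    have := congrFun (congrFun h' k) l
    simpa [Matrix.sub_apply, Matrix.sum_apply, Matrix.smul_apply, smul_eq_mul]
      using this
  -- coefficient matrix identities
  have hcoef : ∀ j ∈ range (ω+1),
      A * Nn j + B * Dn j = (match j with | 0 => 0 | Nat.succ i => Nn i) := by
    intro j hj
    rw [Finset.mem_range] at hj
    ext k l
    have h := hentry k l j
    have h1 : (∑ i ∈ range (ω+1), if i = j then (A * Nn i) k l else 0)
        = (A * Nn j) k l := by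
      rw [Finset.sum_ite_eq' (range (ω+1)) j]
      simp [Finset.mem_range, hj]
    have h2 : (∑ i ∈ range (ω+1), if i = j then (B * Dn i) k l else 0)
        = (B * Dn j) k l := by
      rw [Finset.sum_ite_eq' (range (ω+1)) j]
      simp [Finset.mem_range, hj]
    rw [h1, h2] at h
    match j with
    | 0 =>
      have h0 : (∑ i ∈ range (ω+1), if i+1 = 0 then (Nn i) k l else 0) = 0 := by
        simp
      rw [h0] at h
      simp only [Matrix.add_apply, Matrix.zero_apply]
      linear_combination -h
    | Nat.succ i =>
      have h0 : (∑ i' ∈ range (ω+1), if i'+1 = i+1 then (Nn i') k l else 0)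
          = (Nn i) k l := by
        have : ∀ i' : ℕ, (i' + 1 = i + 1) = (i' = i) := by
          intro i'; simp
        simp only [this]
        rw [Finset.sum_ite_eq' (range (ω+1)) i]
        simp [Finset.mem_range]
        omega
      rw [h0] at h
      simp only [Matrix.add_apply]
      linear_combination -h
  have homega : Nn ω = 0 := by
    ext k l
    have h := hentry k l (ω+1)
    have h1 : (∑ i ∈ range (ω+1), if i = ω+1 then (A * Nn i) k l else 0) = 0 := by
      apply Finset.sum_eq_zero; intro i hi
      rw [Finset.mem_range] at hi
      simp [Nat.ne_of_lt hi]
    have h2 : (∑ i ∈ range (ω+1), if i = ω+1 then (B * Dn i) k l else 0) = 0 := by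
      apply Finset.sum_eq_zero; intro i hi
      rw [Finset.mem_range] at hi
      simp [Nat.ne_of_lt hi]
    have h0 : (∑ i ∈ range (ω+1), if i+1 = ω+1 then (Nn i) k l else 0)
        = (Nn ω) k l := by
      have : ∀ i : ℕ, (i + 1 = ω + 1) = (i = ω) := by intro i; simp
      simp only [this]
      rw [Finset.sum_ite_eq' (range (ω+1)) ω]
      simp
    rw [h0, h1, h2] at h
    simpa using h
  -- now the computation
  calc A * (∑ i ∈ range (ω + 1), Nn i * Z * F ^ i)
        + B * (∑ i ∈ range (ω + 1), Dn i * Z * F ^ i)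
      = ∑ i ∈ range (ω + 1), (A * Nn i + B * Dn i) * Z * F ^ i := by
        rw [Matrix.mul_sum, Matrix.mul_sum, ← Finset.sum_add_distrib]
        exact Finset.sum_congr rfl fun i _ => by
          simp only [Matrix.add_mul, Matrix.mul_assoc]
    _ = ∑ i ∈ range (ω + 1),
          ((match i with | 0 => (0 : Matrix (Fin n ⊕ Fin n) (Fin m ⊕ Fin m) ℂ) | Nat.succ j => Nn j) : Matrix (Fin n ⊕ Fin n) (Fin m ⊕ Fin m) ℂ) * Z * F ^ i := by
        exact Finset.sum_congr rfl fun i hi => by rw [hcoef i hi]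
    _ = ∑ i ∈ range ω, Nn i * Z * F ^ (i+1) := by
        rw [Finset.sum_range_succ']
        simp
    _ = ∑ i ∈ range (ω+1), Nn i * Z * F ^ (i+1) := by
        rw [Finset.sum_range_succ, homega]
        simp
    _ = (∑ i ∈ range (ω + 1), Nn i * Z * F ^ i) * F := by
        rw [Matrix.sum_mul]
        exact Finset.sum_congr rfl fun i _ => by
          rw [pow_succ, ← Matrix.mul_assoc]
end

section
/- Let A1, A2 ∈ ℂ^{n×n}, B1, B2 ∈ ℂ^{n×m}, and let N_{1i}, N_{2i} ∈ ℂ^{n×m}, D_{1i}, D_{2i} ∈ ℂ^{m×m} (i = 0,…,ω) satisfy, for all s ∈ ℂ: (s·I_{2n} - lift(A1,A2))·(Σ_{i=0}^{ω} lift(N_{1i},N_{2i})·s^i) = lift(B1,B2)·(Σ_{i=0}^{ω} lift(D_{1i},D_{2i})·s^i). Assume in addition that for all s ∈ ℂ the 2n×(2n+2m) matrix [s·I_{2n} - lift(A1,A2), lift(B1,B2)] has rank 2n (controllability), and that for all s ∈ ℂ the (2n+2m)×2m matrix obtained by stacking Σ_{i=0}^{ω} lift(N_{1i},N_{2i})·s^i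 on top of Σ_{i=0}^{ω} lift(D_{1i},D_{2i})·s^i has rank 2m (right-coprimeness). Then for every p, every F1, F2 ∈ ℂ^{p×p}, and every solution (X1, X2, Y1, Y2) with X1, X2 ∈ ℂ^{n×p}, Y1, Y2 ∈ ℂ^{m×p} of lift(A1,A2)·lift(X1,X2) + lift(B1,B2)·lift(Y1,Y2) = lift(X1,X2)·lift(F1,F2), there exist Z1, Z2 ∈ ℂ^{m×p} such that lift(X1,X2) = Σ_{i=0}^{ω} lift(N_{1i},N_{2i})·lift(Z1,Z2)·lift(F1,F2)^i and lift(Y1,Y2) = Σ_{i=0}^{ω} lift(D_{1i},D_{2i})·lift(Z1,Z2)·lift(F1,F2)^i. -/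
open Matrix Finset

section Helpers

lemma poly_coeff_zero (k : ℕ) (g : ℕ → ℂ) (h : ∀ s : ℂ, ∑ i ∈ range k, s ^ i * g i = 0) :
    ∀ i, i < k → g i = 0 := by
  intro j hj
  have hP : (∑ i ∈ range k, Polynomial.C (g i) * Polynomial.X ^ i : Polynomial ℂ) = 0 := by
    apply Polynomial.funext
    intro s
    rw [Polynomial.eval_finset_sum]
    simp only [Polynomial.eval_mul, Polynomial.eval_C, Polynomial.eval_pow, Polynomial.eval_X,
      Polynomial.eval_zero]
    rw [← h s]
    exact Finset.sum_congr rfl fun i _ => mul_comm _ _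
  have := congrArg (fun P : Polynomial ℂ => P.coeff j) hP
  simpa [Polynomial.finset_sum_coeff, Polynomial.coeff_C_mul, Polynomial.coeff_X_pow, hj]
    using this

lemma mpoly_coeff_zero {R C : Type*} (k : ℕ) (g : ℕ → Matrix R C ℂ)
    (h : ∀ s : ℂ, ∑ i ∈ range k, s ^ i • g i = 0) : ∀ i, i < k → g i = 0 := by
  intro j hj
  ext r c
  refine poly_coeff_zero k (fun i => g i r c) (fun s => ?_) j hj
  have := congrFun (congrFun (h s) r) c
  simpa [Matrix.sum_apply] using this

lemma sum_mulVec' {ι R C : Type*} [Fintype C] (s : Finset ι) (M : ι → Matrix R C ℂ) (v : C → ℂ) :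
    (∑ i ∈ s, M i) *ᵥ v = ∑ i ∈ s, (M i) *ᵥ v := by
  induction s using Finset.cons_induction with
  | empty => simp
  | cons a s ha ih => simp [Finset.sum_cons, Matrix.add_mulVec, ih]

lemma mulVec_sum' {ι R C : Type*} [Fintype C] (s : Finset ι) (M : Matrix R C ℂ) (v : ι → C → ℂ) :
    M *ᵥ (∑ i ∈ s, v i) = ∑ i ∈ s, M *ᵥ (v i) := by
  induction s using Finset.cons_induction with
  | empty => simp
  | cons a s ha ih => simp [Finset.sum_cons, Matrix.mulVec_add, ih]

lemma mulVecLin_pow' {P : Type*} [Fintype P] [DecidableEq P] (F : Matrix P P ℂ) (i : ℕ) :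
    (F ^ i).mulVecLin = (F.mulVecLin) ^ i := by
  induction i with
  | zero => rw [pow_zero, pow_zero, Matrix.mulVecLin_one]; rfl
  | succ i ih => rw [pow_succ, pow_succ, Matrix.mulVecLin_mul, ih]; rfl

lemma full_colrank_inj {R C : Type*} [Fintype R] [Fintype C] [DecidableEq C]
    (M : Matrix R C ℂ) (hr : M.rank = Fintype.card C) {v : C → ℂ} (hv : M *ᵥ v = 0) : v = 0 := by
  have h1 := LinearMap.finrank_range_add_finrank_ker M.mulVecLin
  have h2 : Module.finrank ℂ (C → ℂ) = Fintype.card C := Module.finrank_pi ℂ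
  have h3 : M.rank = Module.finrank ℂ (LinearMap.range M.mulVecLin) := rfl
  have h4 : Module.finrank ℂ (LinearMap.ker M.mulVecLin) = 0 := by omega
  have h5 : LinearMap.ker M.mulVecLin = ⊥ := Submodule.finrank_eq_zero.mp h4
  have hv' : v ∈ LinearMap.ker M.mulVecLin := by simpa [Matrix.mulVecLin_apply] using hv
  simpa [h5] using hv'

lemma rank_lt_of_left_kernel {R C : Type*} [Fintype R] [Fintype C] [DecidableEq R]
    (M : Matrix R C ℂ) {v : R → ℂ} (h0 : v ≠ 0) (hv : v ᵥ* M = 0) :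
    M.rank < Fintype.card R := by
  rw [← Matrix.rank_transpose]
  have hv' : v ∈ LinearMap.ker Mᵀ.mulVecLin := by
    simp [Matrix.mulVecLin_apply, Matrix.mulVec_transpose, hv]
  have hpos : 0 < Module.finrank ℂ (LinearMap.ker Mᵀ.mulVecLin) := by
    by_contra h
    have h' : Module.finrank ℂ (LinearMap.ker Mᵀ.mulVecLin) = 0 := by omega
    have := Submodule.finrank_eq_zero.mp h'
    rw [this] at hv'
    exact h0 (by simpa using hv')
  have h1 := LinearMap.finrank_range_add_finrank_ker Mᵀ.mulVecLin
  have h2 : Module.finrank ℂ (R → ℂ) = Fintype.card R := Module.finrank_pi ℂ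
  have h3 : Mᵀ.rank = Module.finrank ℂ (LinearMap.range Mᵀ.mulVecLin) := rfl
  omega

end Helpers
lemma param_injective {In Im P : Type*} [Fintype In] [Fintype Im] [Fintype P]
    [DecidableEq P] [DecidableEq Im]
    (ω : ℕ) (N : ℕ → Matrix In Im ℂ) (D : ℕ → Matrix Im Im ℂ) (F : Matrix P P ℂ)
    (hcop : ∀ μ : ℂ, ∀ u : Im → ℂ,
       (∑ i ∈ range (ω+1), μ ^ i • N i) *ᵥ u = 0 →
       (∑ i ∈ range (ω+1), μ ^ i • D i) *ᵥ u = 0 → u = 0)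
    (Z : Matrix Im P ℂ)
    (hN : ∑ i ∈ range (ω+1), N i * Z * F ^ i = 0)
    (hD : ∑ i ∈ range (ω+1), D i * Z * F ^ i = 0) :
    Z = 0 := by
  set f := F.mulVecLin with hf
  have key : ∀ (k : ℕ) (μ : ℂ) (v : P → ℂ), ((f - μ • 1) ^ k) v = 0 → Z *ᵥ v = 0 := by
    intro k
    induction k with
    | zero =>
      intro μ v hv
      simp only [pow_zero, Module.End.one_apply] at hv
      simp [hv]
    | succ k ih =>
      intro μ v hv
      have hgg : ∀ j : ℕ, 1 ≤ j → Z *ᵥ (((f - μ • 1) ^ j) v) = 0 := by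
        intro j hj
        apply ih μ
        have e : ((f - μ • 1) ^ k) (((f - μ • 1) ^ j) v)
            = ((f - μ • 1) ^ (j - 1)) (((f - μ • 1) ^ (k + 1)) v) := by
          rw [← Module.End.mul_apply, ← Module.End.mul_apply, ← pow_add, ← pow_add,
            show k + j = (j - 1) + (k + 1) from by omega]
        rw [e, hv, map_zero]
      have hpow : ∀ i : ℕ, Z *ᵥ ((F ^ i) *ᵥ v) = μ ^ i • (Z *ᵥ v) := by
        intro i
        have hFv : (F ^ i) *ᵥ v = (f ^ i) v := by rw [hf, ← mulVecLin_pow']; rfl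
        have hc : Commute (f - μ • 1) ((μ • 1 : Module.End ℂ (P → ℂ))) :=
          (Commute.one_right _).smul_right μ
        have hexp := hc.add_pow i
        rw [sub_add_cancel] at hexp
        have hfiv : (f ^ i) v = ∑ j ∈ range (i+1), (μ ^ (i-j) * (i.choose j : ℂ)) •
            (((f - μ • 1) ^ j) v) := by
          rw [hexp, LinearMap.sum_apply]
          refine Finset.sum_congr rfl fun j hj => ?_
          rw [smul_pow, one_pow]
          simp only [Module.End.mul_apply, Module.End.natCast_apply, LinearMap.smul_apply,
            Module.End.one_apply, _root_.map_smul, _root_.map_nsmul]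
          rw [← Nat.cast_smul_eq_nsmul ℂ, smul_smul, mul_comm]
        rw [hFv, hfiv, mulVec_sum']
        rw [Finset.sum_eq_single 0]
        · simp [Matrix.mulVec_smul]
        · intro j hj hj0
          rw [Matrix.mulVec_smul, hgg j (by omega), smul_zero]
        · intro h
          simp at h
      have hNv : (∑ i ∈ range (ω+1), μ ^ i • N i) *ᵥ (Z *ᵥ v) = 0 := by
        have h := congrArg (fun M => M *ᵥ v) hN
        simp only [Matrix.zero_mulVec] at h
        rw [sum_mulVec'] at h
        rw [sum_mulVec']
        rw [← h]
        refine Finset.sum_congr rfl fun i hi => ?_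
        rw [Matrix.smul_mulVec, ← Matrix.mulVec_smul, ← hpow i,
          ← Matrix.mulVec_mulVec, ← Matrix.mulVec_mulVec]
      have hDv : (∑ i ∈ range (ω+1), μ ^ i • D i) *ᵥ (Z *ᵥ v) = 0 := by
        have h := congrArg (fun M => M *ᵥ v) hD
        simp only [Matrix.zero_mulVec] at h
        rw [sum_mulVec'] at h
        rw [sum_mulVec']
        rw [← h]
        refine Finset.sum_congr rfl fun i hi => ?_
        rw [Matrix.smul_mulVec, ← Matrix.mulVec_smul, ← hpow i,
          ← Matrix.mulVec_mulVec, ← Matrix.mulVec_mulVec]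
      exact hcop μ (Z *ᵥ v) hNv hDv
  have hall : ∀ v, Z *ᵥ v = 0 := by
    have htop := Module.End.iSup_maxGenEigenspace_eq_top f
    have hle : (⊤ : Submodule ℂ (P → ℂ)) ≤ LinearMap.ker Z.mulVecLin := by
      rw [← htop]
      apply iSup_le
      intro μ x hx
      obtain ⟨k, hk⟩ := (Module.End.mem_maxGenEigenspace f μ x).mp hx
      simpa [Matrix.mulVecLin_apply] using key k μ x hk
    intro v
    simpa [Matrix.mulVecLin_apply] using hle (Submodule.mem_top : v ∈ ⊤)
  ext a b
  have := congrFun (hall (Pi.single b 1)) a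
  simpa [Matrix.mulVec_single] using this
noncomputable def PhiMap {In Im P : Type*} [Fintype Im] [Fintype P] [DecidableEq P]
    (ω : ℕ) (N : ℕ → Matrix In Im ℂ) (F : Matrix P P ℂ) :
    Matrix Im P ℂ →ₗ[ℂ] Matrix In P ℂ where
  toFun Z := ∑ i ∈ range (ω+1), N i * Z * F ^ i
  map_add' x y := by simp [Matrix.mul_add, Matrix.add_mul, Finset.sum_add_distrib]
  map_smul' c x := by simp [Matrix.mul_smul, Matrix.smul_mul, Finset.smul_sum]

noncomputable def swapM (k : Type*) [DecidableEq k] : Matrix (k ⊕ k) (k ⊕ k) ℂ :=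
  Matrix.fromBlocks 0 1 1 0

lemma swapM_mul_self {k : Type*} [Fintype k] [DecidableEq k] : swapM k * swapM k = 1 := by
  simp [swapM, Matrix.fromBlocks_multiply, ← Matrix.fromBlocks_one]

lemma mconj_mconj {a b : Type*} (M : Matrix a b ℂ) : mconj (mconj M) = M := by
  ext i j; simp [mconj]

lemma mconj_mul {a b c : Type*} [Fintype b] (M : Matrix a b ℂ) (N : Matrix b c ℂ) :
    mconj (M * N) = mconj M * mconj N := by
  ext i j; simp [mconj, Matrix.mul_apply, map_sum]

lemma mconj_add {a b : Type*} (M N : Matrix a b ℂ) : mconj (M + N) = mconj M + mconj N := by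
  ext i j; simp [mconj]

lemma mconj_smul {a b : Type*} (c : ℂ) (M : Matrix a b ℂ) :
    mconj (c • M) = (starRingEnd ℂ c) • mconj M := by
  ext i j; simp [mconj]

lemma mconj_sum {ι a b : Type*} (s : Finset ι) (M : ι → Matrix a b ℂ) :
    mconj (∑ i ∈ s, M i) = ∑ i ∈ s, mconj (M i) := by
  induction s using Finset.cons_induction with
  | empty => ext i j; simp [mconj]
  | cons x s hx ih => rw [Finset.sum_cons, Finset.sum_cons, mconj_add, ih]

lemma mconj_pow {a : Type*} [Fintype a] [DecidableEq a] (M : Matrix a a ℂ) (i : ℕ) :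
    mconj (M ^ i) = (mconj M) ^ i := by
  induction i with
  | zero =>
    rw [pow_zero, pow_zero]
    ext i j
    simp only [mconj, Matrix.map_apply, Matrix.one_apply]
    split <;> simp
  | succ i ih => rw [pow_succ, pow_succ, mconj_mul, ih]

lemma mconj_clift {a b : Type*} (M1 M2 : Matrix a b ℂ) :
    mconj (clift M1 M2) = Matrix.fromBlocks (mconj M1) M2 (mconj M2) M1 := by
  ext i j
  cases i <;> cases j <;> simp [mconj, clift, Matrix.fromBlocks]

lemma swap_fromBlocks_swap {a b : Type*} [Fintype a] [Fintype b] [DecidableEq a] [DecidableEq b]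
    (P : Matrix a b ℂ) (Q : Matrix a b ℂ) (R : Matrix a b ℂ) (S : Matrix a b ℂ) :
    swapM a * Matrix.fromBlocks P Q R S * swapM b = Matrix.fromBlocks S R Q P := by
  simp [swapM, Matrix.fromBlocks_multiply]

lemma swap_mconj_clift {a b : Type*} [Fintype a] [Fintype b] [DecidableEq a] [DecidableEq b]
    (M1 M2 : Matrix a b ℂ) : swapM a * mconj (clift M1 M2) * swapM b = clift M1 M2 := by
  rw [mconj_clift, swap_fromBlocks_swap, clift]

lemma exists_clift_of_symm {a b : Type*} [Fintype a] [Fintype b] [DecidableEq a] [DecidableEq b]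
    (M : Matrix (a ⊕ a) (b ⊕ b) ℂ) (h : swapM a * mconj M * swapM b = M) :
    ∃ M1 M2, M = clift M1 M2 := by
  refine ⟨M.toBlocks₁₁, M.toBlocks₂₁, ?_⟩
  have h' : swapM a * mconj (Matrix.fromBlocks M.toBlocks₁₁ M.toBlocks₁₂ M.toBlocks₂₁ M.toBlocks₂₂)
      * swapM b = M := by rw [Matrix.fromBlocks_toBlocks]; exact h
  have hmc : mconj (Matrix.fromBlocks M.toBlocks₁₁ M.toBlocks₁₂ M.toBlocks₂₁ M.toBlocks₂₂)
      = Matrix.fromBlocks (mconj M.toBlocks₁₁) (mconj M.toBlocks₁₂) (mconj M.toBlocks₂₁)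
        (mconj M.toBlocks₂₂) := by
    ext i j; cases i <;> cases j <;> simp [mconj, Matrix.fromBlocks]
  rw [hmc, swap_fromBlocks_swap] at h'
  have h12 : mconj M.toBlocks₂₁ = M.toBlocks₁₂ := by
    have := congrArg Matrix.toBlocks₁₂ h'
    simpa [Matrix.toBlocks_fromBlocks₁₂] using this
  have h22 : mconj M.toBlocks₁₁ = M.toBlocks₂₂ := by
    have := congrArg Matrix.toBlocks₂₂ h'
    simpa [Matrix.toBlocks_fromBlocks₂₂] using this
  conv_lhs => rw [← Matrix.fromBlocks_toBlocks M]
  rw [clift, h12, h22]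

lemma sandwich_pow {a : Type*} [Fintype a] [DecidableEq a] (J M : Matrix a a ℂ)
    (hJ : J * J = 1) (i : ℕ) : (J * M * J) ^ i = J * M ^ i * J := by
  induction i with
  | zero => rw [pow_zero, pow_zero, mul_one, hJ]
  | succ i ih =>
    rw [pow_succ, ih]
    have h1 : J * M ^ i * J * (J * M * J) = J * M ^ i * (J * J) * (M * J) := by
      noncomm_ring
    rw [h1, hJ, mul_one]
    noncomm_ring
noncomputable def PsiMap {In Im P : Type*} [Fintype In] [Fintype Im] [Fintype P]
    (A : Matrix In In ℂ) (B : Matrix In Im ℂ) (F : Matrix P P ℂ) :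
    (Matrix In P ℂ × Matrix Im P ℂ) →ₗ[ℂ] Matrix In P ℂ where
  toFun q := A * q.1 + B * q.2 - q.1 * F
  map_add' x y := by
    simp only [Prod.fst_add, Prod.snd_add, Matrix.mul_add, Matrix.add_mul]
    abel
  map_smul' c x := by
    simp only [Prod.smul_fst, Prod.smul_snd, Matrix.mul_smul, Matrix.smul_mul, RingHom.id_apply,
      smul_add, smul_sub]

lemma eq_zero_of_trace_mul_eq_zero {In P : Type*} [Fintype In] [Fintype P] [DecidableEq In]
    [DecidableEq P] (C : Matrix P In ℂ)
    (h : ∀ X : Matrix In P ℂ, Matrix.trace (C * X) = 0) : C = 0 := by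
  ext i j
  have h1 := h (Matrix.single j i 1)
  rw [Matrix.trace] at h1
  simp only [Matrix.diag, Matrix.mul_apply, Matrix.single, Matrix.of_apply,
    mul_ite, mul_one, mul_zero] at h1
  simp only [ite_and, Finset.sum_ite_eq', Finset.mem_univ, if_true] at h1
  simpa using h1

lemma dual_rep {In P : Type*} [Fintype In] [Fintype P] [DecidableEq In] [DecidableEq P]
    (φ : Matrix In P ℂ →ₗ[ℂ] ℂ) (M : Matrix In P ℂ) :
    φ M = Matrix.trace ((Matrix.of fun c r => φ (Matrix.single r c 1)) * M) := by
  conv_lhs => rw [Matrix.matrix_eq_sum_single M]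
  rw [map_sum]
  rw [Matrix.trace]
  simp only [Matrix.diag, Matrix.mul_apply, Matrix.of_apply]
  rw [Finset.sum_comm]
  refine Finset.sum_congr rfl fun r _ => ?_
  rw [map_sum]
  refine Finset.sum_congr rfl fun c _ => ?_
  have : Matrix.single r c (M r c) = M r c • Matrix.single r c 1 := by
    rw [Matrix.smul_single, smul_eq_mul, mul_one]
  rw [this, _root_.map_smul, smul_eq_mul, mul_comm]

lemma psi_surjective {In Im P : Type*} [Fintype In] [Fintype Im] [Fintype P]
    [DecidableEq In] [DecidableEq Im] [DecidableEq P]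
    (A : Matrix In In ℂ) (B : Matrix In Im ℂ) (F : Matrix P P ℂ)
    (hctrb : ∀ μ : ℂ, ∀ u : In → ℂ, u ᵥ* A = μ • u → u ᵥ* B = 0 → u = 0) :
    Function.Surjective (PsiMap A B F) := by
  rw [← LinearMap.range_eq_top]
  by_contra hr
  obtain ⟨φ, hφ0, hle⟩ := (LinearMap.range (PsiMap A B F)).exists_le_ker_of_lt_top
    (lt_top_iff_ne_top.mpr hr)
  set W : Matrix P In ℂ := Matrix.of (fun c r => φ (Matrix.single r c 1)) with hWdef
  have hrep : ∀ M, φ M = Matrix.trace (W * M) := dual_rep φ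
  have hzero : ∀ q, φ (PsiMap A B F q) = 0 := fun q => hle ⟨q, rfl⟩
  have hWA : W * A = F * W := by
    rw [← sub_eq_zero]
    apply eq_zero_of_trace_mul_eq_zero
    intro X
    have h1 := hzero (X, 0)
    have h2 : PsiMap A B F (X, 0) = A * X - X * F := by
      simp [PsiMap]
    rw [h2, hrep] at h1
    calc Matrix.trace ((W * A - F * W) * X)
        = Matrix.trace (W * (A * X)) - Matrix.trace (F * W * X) := by
          rw [Matrix.sub_mul, Matrix.trace_sub, Matrix.mul_assoc]
      _ = Matrix.trace (W * (A * X)) - Matrix.trace (W * (X * F)) := by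
          rw [Matrix.mul_assoc, Matrix.trace_mul_comm (F) (W * X), Matrix.mul_assoc]
      _ = Matrix.trace (W * (A * X - X * F)) := by rw [Matrix.mul_sub, Matrix.trace_sub]
      _ = 0 := h1
  have hWB : W * B = 0 := by
    apply eq_zero_of_trace_mul_eq_zero
    intro Yv
    have h1 := hzero (0, Yv)
    have h2 : PsiMap A B F (0, Yv) = B * Yv := by
      simp [PsiMap]
    rw [h2, hrep] at h1
    rw [Matrix.mul_assoc]
    exact h1
  have hW0 : W ≠ 0 := by
    intro h
    apply hφ0
    apply LinearMap.ext
    intro M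
    rw [hrep, h, Matrix.zero_mul]
    simp
  have hMA : Aᵀ * Wᵀ = Wᵀ * Fᵀ := by
    rw [← Matrix.transpose_mul, ← Matrix.transpose_mul, hWA]
  have hMB : Bᵀ * Wᵀ = 0 := by rw [← Matrix.transpose_mul, hWB, Matrix.transpose_zero]
  set f := Fᵀ.mulVecLin with hfdef
  set g := Aᵀ.mulVecLin with hgdef
  have hWt0 : Wᵀ ≠ 0 := fun h => hW0 (by simpa using congrArg Matrix.transpose h)
  have hker : ¬ ((⊤ : Submodule ℂ (P → ℂ)) ≤ LinearMap.ker Wᵀ.mulVecLin) := by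
    intro h
    apply hWt0
    ext a b
    have := congrFun (LinearMap.mem_ker.mp (h (Submodule.mem_top (x := Pi.single b 1)))) a
    simpa [Matrix.mulVecLin_apply, Matrix.mulVec_single] using this
  have htop := Module.End.iSup_maxGenEigenspace_eq_top f
  have hexμ : ∃ μ, ¬ (Module.End.maxGenEigenspace f μ ≤ LinearMap.ker Wᵀ.mulVecLin) := by
    by_contra h
    push_neg at h
    exact hker (htop ▸ iSup_le h)
  obtain ⟨μ, hμ⟩ := hexμ
  obtain ⟨v, hvmem, hvker⟩ := SetLike.not_le_iff_exists.mp hμ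
  obtain ⟨k, hk⟩ := (Module.End.mem_maxGenEigenspace f μ v).mp hvmem
  set g' : Module.End ℂ (In → ℂ) := g - μ • 1 with hg'def
  set f' : Module.End ℂ (P → ℂ) := f - μ • 1 with hf'def
  have hint : ∀ (j : ℕ) (w : P → ℂ),
      (g' ^ j) (Wᵀ *ᵥ w) = Wᵀ *ᵥ ((f' ^ j) w) := by
    intro j
    induction j with
    | zero => intro w; simp
    | succ j ih =>
      intro w
      rw [pow_succ, pow_succ, Module.End.mul_apply, Module.End.mul_apply]
      have hstep : ∀ u : P → ℂ, g' (Wᵀ *ᵥ u) = Wᵀ *ᵥ (f' u) := by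
        intro u
        simp only [hg'def, hf'def, LinearMap.sub_apply, LinearMap.smul_apply, Module.End.one_apply,
          hgdef, hfdef, Matrix.mulVecLin_apply]
        rw [Matrix.mulVec_mulVec, hMA, ← Matrix.mulVec_mulVec, Matrix.mulVec_sub,
          Matrix.mulVec_smul]
      rw [hstep, ih]
  have hex : ∃ j, (g' ^ j) (Wᵀ *ᵥ v) = 0 :=
    ⟨k, by rw [hint k v, hk, Matrix.mulVec_zero]⟩
  classical
  have hu00 : Wᵀ *ᵥ v ≠ 0 := by
    intro h
    exact hvker (LinearMap.mem_ker.mpr (by rw [Matrix.mulVecLin_apply]; exact h))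
  have hj0pos : 0 < Nat.find hex := by
    rcases Nat.eq_zero_or_pos (Nat.find hex) with h | h
    · exfalso
      have := Nat.find_spec hex
      rw [h, pow_zero, Module.End.one_apply] at this
      exact hu00 this
    · exact h
  set u := (g' ^ (Nat.find hex - 1)) (Wᵀ *ᵥ v) with hudef
  have hu0 : u ≠ 0 := Nat.find_min hex (by omega)
  have hgu : g' u = 0 := by
    have hspec := Nat.find_spec hex
    rw [hudef, ← Module.End.mul_apply, ← pow_succ', show Nat.find hex - 1 + 1 = Nat.find hex from by omega]
    exact hspec
  have huW : u = Wᵀ *ᵥ ((f' ^ (Nat.find hex - 1)) v) := hint _ v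
  have hBu : Bᵀ *ᵥ u = 0 := by
    rw [huW, Matrix.mulVec_mulVec, hMB, Matrix.zero_mulVec]
  have hAu : Aᵀ *ᵥ u = μ • u := by
    have := hgu
    simp only [hg'def, LinearMap.sub_apply, LinearMap.smul_apply, Module.End.one_apply, hgdef,
      Matrix.mulVecLin_apply, sub_eq_zero] at this
    exact this
  have h1 : u ᵥ* A = μ • u := by rw [← Matrix.mulVec_transpose]; exact hAu
  have h2 : u ᵥ* B = 0 := by rw [← Matrix.mulVec_transpose]; exact hBu
  exact hu0 (hctrb μ u h1 h2)
@[simp] lemma PsiMap_apply {In Im P : Type*} [Fintype In] [Fintype Im] [Fintype P]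
    (A : Matrix In In ℂ) (B : Matrix In Im ℂ) (F : Matrix P P ℂ)
    (q : Matrix In P ℂ × Matrix Im P ℂ) :
    PsiMap A B F q = A * q.1 + B * q.2 - q.1 * F := rfl

@[simp] lemma PhiMap_apply {In Im P : Type*} [Fintype Im] [Fintype P] [DecidableEq P]
    (ω : ℕ) (N : ℕ → Matrix In Im ℂ) (F : Matrix P P ℂ) (Z : Matrix Im P ℂ) :
    PhiMap ω N F Z = ∑ i ∈ range (ω+1), N i * Z * F ^ i := rfl



lemma master {In Im P : Type*} [Fintype In] [Fintype Im] [Fintype P]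
    [DecidableEq In] [DecidableEq Im] [DecidableEq P]
    (ω : ℕ) (A : Matrix In In ℂ) (B : Matrix In Im ℂ) (N : ℕ → Matrix In Im ℂ)
    (D : ℕ → Matrix Im Im ℂ) (F : Matrix P P ℂ) (X : Matrix In P ℂ) (Y : Matrix Im P ℂ)
    (hrec : ∀ j, j < ω → N j = A * N (j+1) + B * D (j+1))
    (h0 : A * N 0 + B * D 0 = 0)
    (htopN : N ω = 0)
    (hcop : ∀ μ : ℂ, ∀ u : Im → ℂ,
       (∑ i ∈ range (ω+1), μ ^ i • N i) *ᵥ u = 0 →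
       (∑ i ∈ range (ω+1), μ ^ i • D i) *ᵥ u = 0 → u = 0)
    (hctrb : ∀ μ : ℂ, ∀ u : In → ℂ, u ᵥ* A = μ • u → u ᵥ* B = 0 → u = 0)
    (heq : A * X + B * Y = X * F) :
    ∃ Z : Matrix Im P ℂ,
      X = ∑ i ∈ range (ω+1), N i * Z * F ^ i ∧
      Y = ∑ i ∈ range (ω+1), D i * Z * F ^ i := by
  classical
  set Φfull : Matrix Im P ℂ →ₗ[ℂ] (Matrix In P ℂ × Matrix Im P ℂ) :=
    (PhiMap ω N F).prod (PhiMap ω D F) with hΦdef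
  have hΦψ : ∀ Z, PsiMap A B F (Φfull Z) = 0 := by
    intro Z
    rw [hΦdef]
    simp only [LinearMap.prod_apply, Function.prod, PsiMap_apply, PhiMap_apply]
    have hA : A * (∑ i ∈ range (ω+1), N i * Z * F ^ i)
        = ∑ i ∈ range (ω+1), (A * N i) * Z * F ^ i := by
      rw [Matrix.mul_sum]
      exact Finset.sum_congr rfl fun i _ => by rw [← Matrix.mul_assoc, ← Matrix.mul_assoc]
    have hB : B * (∑ i ∈ range (ω+1), D i * Z * F ^ i)
        = ∑ i ∈ range (ω+1), (B * D i) * Z * F ^ i := by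
      rw [Matrix.mul_sum]
      exact Finset.sum_congr rfl fun i _ => by rw [← Matrix.mul_assoc, ← Matrix.mul_assoc]
    rw [hA, hB, ← Finset.sum_add_distrib]
    have hcomb : ∑ i ∈ range (ω+1), ((A * N i) * Z * F ^ i + (B * D i) * Z * F ^ i)
        = ∑ i ∈ range (ω+1), (A * N i + B * D i) * Z * F ^ i :=
      Finset.sum_congr rfl fun i _ => by rw [Matrix.add_mul, Matrix.add_mul]
    rw [hcomb]
    have hL : ∑ i ∈ range (ω+1), (A * N i + B * D i) * Z * F ^ i
        = ∑ i ∈ range ω, N i * Z * F ^ (i+1) := by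
      rw [Finset.sum_range_succ']
      have h00 : (A * N 0 + B * D 0) * Z * F ^ 0 = 0 := by rw [h0, Matrix.zero_mul, Matrix.zero_mul]
      rw [h00, add_zero]
      exact Finset.sum_congr rfl fun i hi => by
        rw [← hrec i (Finset.mem_range.mp hi)]
    have hR : (∑ i ∈ range (ω+1), N i * Z * F ^ i) * F
        = ∑ i ∈ range ω, N i * Z * F ^ (i+1) := by
      rw [Matrix.sum_mul, Finset.sum_range_succ, htopN, Matrix.zero_mul, Matrix.zero_mul, Matrix.zero_mul, add_zero]
      exact Finset.sum_congr rfl fun i _ => by rw [Matrix.mul_assoc, ← pow_succ]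
    rw [hL, hR, sub_self]
  have hψs : Function.Surjective (PsiMap A B F) := psi_surjective A B F hctrb
  have hΦinj : Function.Injective Φfull := by
    rw [← LinearMap.ker_eq_bot, eq_bot_iff]
    intro Z hZ
    rw [LinearMap.mem_ker, hΦdef] at hZ
    simp only [LinearMap.prod_apply, Function.prod, Prod.mk_eq_zero, PhiMap_apply] at hZ
    have := param_injective ω N D F hcop Z hZ.1 hZ.2
    simp [this]
  have hfr : Module.finrank ℂ (LinearMap.ker (PsiMap A B F))
      = Module.finrank ℂ (Matrix Im P ℂ) := by
    have h1 := LinearMap.finrank_range_add_finrank_ker (PsiMap A B F)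
    rw [LinearMap.range_eq_top.mpr hψs, finrank_top] at h1
    have h2 : Module.finrank ℂ (Matrix In P ℂ × Matrix Im P ℂ)
        = Module.finrank ℂ (Matrix In P ℂ) + Module.finrank ℂ (Matrix Im P ℂ) :=
      Module.finrank_prod
    omega
  set Φr : Matrix Im P ℂ →ₗ[ℂ] LinearMap.ker (PsiMap A B F) :=
    Φfull.codRestrict (LinearMap.ker (PsiMap A B F)) (fun Z => LinearMap.mem_ker.mpr (hΦψ Z))
    with hΦr
  have hrinj : Function.Injective Φr := by
    intro a b hab
    apply hΦinj
    have := congrArg Subtype.val hab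
    simpa [hΦr, LinearMap.codRestrict_apply] using this
  have hrsurj : Function.Surjective Φr :=
    (LinearMap.injective_iff_surjective_of_finrank_eq_finrank hfr.symm).mp hrinj
  have hmem : (X, Y) ∈ LinearMap.ker (PsiMap A B F) := by
    rw [LinearMap.mem_ker, PsiMap_apply]
    rw [heq]
    simp
  obtain ⟨Z, hZ⟩ := hrsurj ⟨(X, Y), hmem⟩
  have hZ' : Φfull Z = (X, Y) := by
    have := congrArg Subtype.val hZ
    simpa [hΦr, LinearMap.codRestrict_apply] using this
  rw [hΦdef] at hZ'
  simp only [LinearMap.prod_apply, Function.prod, Prod.mk.injEq, PhiMap_apply] at hZ'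
  exact ⟨Z, hZ'.1.symm, hZ'.2.symm⟩

lemma mconj_swapM {k : Type*} [DecidableEq k] : mconj (swapM k) = swapM k := by
  ext i j
  cases i <;> cases j <;>
    simp [swapM, mconj, Matrix.fromBlocks, Matrix.one_apply, apply_ite]

lemma swap_swap_cancel {k R : Type*} [Fintype k] [DecidableEq k]
    (x : Matrix (k ⊕ k) R ℂ) : swapM k * (swapM k * x) = x := by
  rw [← Matrix.mul_assoc, swapM_mul_self, Matrix.one_mul]

lemma swap_term {a b c : Type*} [Fintype a] [Fintype b] [Fintype c]
    [DecidableEq a] [DecidableEq b] [DecidableEq c]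
    (Nm : Matrix (a ⊕ a) (b ⊕ b) ℂ) (Z : Matrix (b ⊕ b) (c ⊕ c) ℂ)
    (Fm : Matrix (c ⊕ c) (c ⊕ c) ℂ) (i : ℕ)
    (hN : swapM a * mconj Nm * swapM b = Nm) (hF : swapM c * mconj Fm * swapM c = Fm) :
    swapM a * mconj (Nm * Z * Fm ^ i) * swapM c
      = Nm * (swapM b * mconj Z * swapM c) * Fm ^ i := by
  have hFi : Fm ^ i = swapM c * (mconj Fm) ^ i * swapM c := by
    rw [← sandwich_pow _ _ swapM_mul_self, hF]
  rw [mconj_mul, mconj_mul, mconj_pow]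
  conv_rhs => rw [← hN, hFi]
  simp only [Matrix.mul_assoc]
  rw [swap_swap_cancel, swap_swap_cancel]

/-- under controllability and right-coprimeness, every solution of the
generalized Sylvester bimatrix equation is of the parametric form. -/
theorem stmt_3 {n m : ℕ} (ω : ℕ)
    (A1 A2 : Matrix (Fin n) (Fin n) ℂ) (B1 B2 : Matrix (Fin n) (Fin m) ℂ)
    (N1 N2 : ℕ → Matrix (Fin n) (Fin m) ℂ) (D1 D2 : ℕ → Matrix (Fin m) (Fin m) ℂ)
    (hfac : ∀ s : ℂ,
      (s • (1 : Matrix (Fin n ⊕ Fin n) (Fin n ⊕ Fin n) ℂ) - clift A1 A2)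
          * (∑ i ∈ range (ω + 1), s ^ i • clift (N1 i) (N2 i))
        = clift B1 B2 * (∑ i ∈ range (ω + 1), s ^ i • clift (D1 i) (D2 i)))
    (hctrb : ∀ s : ℂ,
      (Matrix.fromCols
        (s • (1 : Matrix (Fin n ⊕ Fin n) (Fin n ⊕ Fin n) ℂ) - clift A1 A2)
        (clift B1 B2)).rank = 2 * n)
    (hcop : ∀ s : ℂ,
      (Matrix.fromRows
        (∑ i ∈ range (ω + 1), s ^ i • clift (N1 i) (N2 i))
        (∑ i ∈ range (ω + 1), s ^ i • clift (D1 i) (D2 i))).rank = 2 * m)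
    {p : ℕ} (F1 F2 : Matrix (Fin p) (Fin p) ℂ)
    (X1 X2 : Matrix (Fin n) (Fin p) ℂ) (Y1 Y2 : Matrix (Fin m) (Fin p) ℂ)
    (heq : clift A1 A2 * clift X1 X2 + clift B1 B2 * clift Y1 Y2
      = clift X1 X2 * clift F1 F2) :
    ∃ Z1 Z2 : Matrix (Fin m) (Fin p) ℂ,
      clift X1 X2 = ∑ i ∈ range (ω + 1),
        clift (N1 i) (N2 i) * clift Z1 Z2 * (clift F1 F2) ^ i ∧
      clift Y1 Y2 = ∑ i ∈ range (ω + 1),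
        clift (D1 i) (D2 i) * clift Z1 Z2 * (clift F1 F2) ^ i := by
  classical
  -- Step 1: coefficient extraction from the polynomial factorization identity
  have hco : ∀ j, j < ω + 2 →
      (if 1 ≤ j ∧ j ≤ ω + 1 then clift (N1 (j-1)) (N2 (j-1)) else 0)
        - (if j ≤ ω then clift A1 A2 * clift (N1 j) (N2 j) + clift B1 B2 * clift (D1 j) (D2 j)
           else 0) = 0 := by
    apply mpoly_coeff_zero (ω + 2)
    intro s
    have e1 : ∑ j ∈ range (ω+2), s ^ j •
        ((if 1 ≤ j ∧ j ≤ ω + 1 then clift (N1 (j-1)) (N2 (j-1)) else 0)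
          - (if j ≤ ω then clift A1 A2 * clift (N1 j) (N2 j)
              + clift B1 B2 * clift (D1 j) (D2 j) else 0))
        = (∑ j ∈ range (ω+2), s ^ j •
            (if 1 ≤ j ∧ j ≤ ω + 1 then clift (N1 (j-1)) (N2 (j-1)) else 0))
          - ∑ j ∈ range (ω+2), s ^ j • (if j ≤ ω then clift A1 A2 * clift (N1 j) (N2 j)
              + clift B1 B2 * clift (D1 j) (D2 j) else 0) := by
      rw [← Finset.sum_sub_distrib]
      exact Finset.sum_congr rfl fun j _ => smul_sub _ _ _
    rw [e1]
    have e2 : (∑ j ∈ range (ω+2), s ^ j •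
          (if 1 ≤ j ∧ j ≤ ω + 1 then clift (N1 (j-1)) (N2 (j-1)) else 0))
        = ∑ i ∈ range (ω+1), s ^ (i+1) • clift (N1 i) (N2 i) := by
      rw [Finset.sum_range_succ']
      have hz : s ^ 0 • (if 1 ≤ 0 ∧ 0 ≤ ω + 1 then clift (N1 (0-1)) (N2 (0-1))
          else (0 : Matrix (Fin n ⊕ Fin n) (Fin m ⊕ Fin m) ℂ)) = 0 := by
        rw [if_neg (by omega)]; simp
      rw [hz, add_zero]
      refine Finset.sum_congr rfl fun i hi => ?_
      have hi' := Finset.mem_range.mp hi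
      rw [if_pos (⟨by omega, by omega⟩ : 1 ≤ i + 1 ∧ i + 1 ≤ ω + 1)]
      simp
    have e3 : (∑ j ∈ range (ω+2), s ^ j • (if j ≤ ω then clift A1 A2 * clift (N1 j) (N2 j)
          + clift B1 B2 * clift (D1 j) (D2 j) else 0))
        = ∑ j ∈ range (ω+1), s ^ j • (clift A1 A2 * clift (N1 j) (N2 j)
          + clift B1 B2 * clift (D1 j) (D2 j)) := by
      rw [Finset.sum_range_succ, if_neg (by omega), smul_zero, add_zero]
      refine Finset.sum_congr rfl fun j hj => ?_
      rw [if_pos (by have := Finset.mem_range.mp hj; omega : j ≤ ω)]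
    rw [e2, e3, sub_eq_zero]
    have hf := hfac s
    have hL : (s • (1 : Matrix (Fin n ⊕ Fin n) (Fin n ⊕ Fin n) ℂ) - clift A1 A2)
          * (∑ i ∈ range (ω+1), s ^ i • clift (N1 i) (N2 i))
        = (∑ i ∈ range (ω+1), s ^ (i+1) • clift (N1 i) (N2 i))
          - ∑ i ∈ range (ω+1), s ^ i • (clift A1 A2 * clift (N1 i) (N2 i)) := by
      rw [Matrix.sub_mul, Matrix.smul_mul, Matrix.one_mul, Finset.smul_sum, Matrix.mul_sum]
      congr 1
      · exact Finset.sum_congr rfl fun i _ => by rw [smul_smul, ← pow_succ']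
      · exact Finset.sum_congr rfl fun i _ => Matrix.mul_smul _ _ _
    have hR : clift B1 B2 * (∑ i ∈ range (ω+1), s ^ i • clift (D1 i) (D2 i))
        = ∑ i ∈ range (ω+1), s ^ i • (clift B1 B2 * clift (D1 i) (D2 i)) := by
      rw [Matrix.mul_sum]
      exact Finset.sum_congr rfl fun i _ => Matrix.mul_smul _ _ _
    rw [hL, hR] at hf
    have e4 : ∑ j ∈ range (ω+1), s ^ j • (clift A1 A2 * clift (N1 j) (N2 j)
          + clift B1 B2 * clift (D1 j) (D2 j))
        = (∑ j ∈ range (ω+1), s ^ j • (clift A1 A2 * clift (N1 j) (N2 j)))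
          + ∑ j ∈ range (ω+1), s ^ j • (clift B1 B2 * clift (D1 j) (D2 j)) := by
      rw [← Finset.sum_add_distrib]
      exact Finset.sum_congr rfl fun j _ => smul_add _ _ _
    rw [e4, ← hf]
    abel
  have htopN : clift (N1 ω) (N2 ω) = 0 := by
    have h := hco (ω+1) (by omega)
    rw [if_pos (⟨by omega, le_refl _⟩ : 1 ≤ ω + 1 ∧ ω + 1 ≤ ω + 1), if_neg (by omega)] at h
    simpa using h
  have h0 : clift A1 A2 * clift (N1 0) (N2 0) + clift B1 B2 * clift (D1 0) (D2 0) = 0 := by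
    have h := hco 0 (by omega)
    rw [if_neg (by omega), if_pos (by omega : (0:ℕ) ≤ ω)] at h
    rw [zero_sub, neg_eq_zero] at h
    exact h
  have hrec : ∀ j, j < ω → clift (N1 j) (N2 j)
      = clift A1 A2 * clift (N1 (j+1)) (N2 (j+1))
        + clift B1 B2 * clift (D1 (j+1)) (D2 (j+1)) := by
    intro j hj
    have h := hco (j+1) (by omega)
    rw [if_pos (⟨by omega, by omega⟩ : 1 ≤ j + 1 ∧ j + 1 ≤ ω + 1),
      if_pos (by omega : j + 1 ≤ ω)] at h
    rw [sub_eq_zero] at h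
    simpa using h
  -- Step 2: convert the rank hypotheses
  have hcop' : ∀ μ : ℂ, ∀ u : (Fin m ⊕ Fin m) → ℂ,
      (∑ i ∈ range (ω+1), μ ^ i • clift (N1 i) (N2 i)) *ᵥ u = 0 →
      (∑ i ∈ range (ω+1), μ ^ i • clift (D1 i) (D2 i)) *ᵥ u = 0 → u = 0 := by
    intro μ u h1 h2
    apply full_colrank_inj (Matrix.fromRows (∑ i ∈ range (ω+1), μ ^ i • clift (N1 i) (N2 i))
      (∑ i ∈ range (ω+1), μ ^ i • clift (D1 i) (D2 i)))
    · rw [hcop μ]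
      simp [Fintype.card_sum, two_mul]
    · rw [Matrix.fromRows_mulVec, h1, h2]
      ext (i | i) <;> simp
  have hctrb' : ∀ μ : ℂ, ∀ u : (Fin n ⊕ Fin n) → ℂ,
      u ᵥ* clift A1 A2 = μ • u → u ᵥ* clift B1 B2 = 0 → u = 0 := by
    intro μ u h1 h2
    by_contra hu
    have hk : u ᵥ* (Matrix.fromCols
        (μ • (1 : Matrix (Fin n ⊕ Fin n) (Fin n ⊕ Fin n) ℂ) - clift A1 A2)
        (clift B1 B2)) = 0 := by
      rw [Matrix.vecMul_fromCols, h2]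
      have : u ᵥ* (μ • (1 : Matrix (Fin n ⊕ Fin n) (Fin n ⊕ Fin n) ℂ) - clift A1 A2) = 0 := by
        rw [← Matrix.mulVec_transpose, Matrix.transpose_sub, Matrix.transpose_smul,
          Matrix.transpose_one, Matrix.sub_mulVec, Matrix.smul_mulVec, Matrix.one_mulVec,
          Matrix.mulVec_transpose, h1, sub_self]
      rw [this]
      ext (i | i) <;> simp
    have hlt := rank_lt_of_left_kernel _ hu hk
    rw [hctrb μ] at hlt
    simp [Fintype.card_sum] at hlt
    omega
  -- Step 3: apply the master lemma
  obtain ⟨Zt, hXZ0, hYZ0⟩ := master ω (clift A1 A2) (clift B1 B2)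
    (fun i => clift (N1 i) (N2 i)) (fun i => clift (D1 i) (D2 i)) (clift F1 F2)
    (clift X1 X2) (clift Y1 Y2) hrec h0 htopN hcop' hctrb' heq
  have hXZ : clift X1 X2
      = ∑ i ∈ range (ω+1), clift (N1 i) (N2 i) * Zt * clift F1 F2 ^ i := hXZ0
  have hYZ : clift Y1 Y2
      = ∑ i ∈ range (ω+1), clift (D1 i) (D2 i) * Zt * clift F1 F2 ^ i := hYZ0
  -- Step 4: symmetrize the parameter so that it is itself a lifting
  set Zc : Matrix (Fin m ⊕ Fin m) (Fin p ⊕ Fin p) ℂ :=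
    swapM (Fin m) * mconj Zt * swapM (Fin p) with hZc
  have hXZ2 : clift X1 X2
      = ∑ i ∈ range (ω+1), clift (N1 i) (N2 i) * Zc * clift F1 F2 ^ i := by
    conv_lhs => rw [← swap_mconj_clift X1 X2]
    rw [hXZ, mconj_sum, Matrix.mul_sum, Matrix.sum_mul]
    exact Finset.sum_congr rfl fun i _ =>
      swap_term _ _ _ i (swap_mconj_clift _ _) (swap_mconj_clift _ _)
  have hYZ2 : clift Y1 Y2
      = ∑ i ∈ range (ω+1), clift (D1 i) (D2 i) * Zc * clift F1 F2 ^ i := by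
    conv_lhs => rw [← swap_mconj_clift Y1 Y2]
    rw [hYZ, mconj_sum, Matrix.mul_sum, Matrix.sum_mul]
    exact Finset.sum_congr rfl fun i _ =>
      swap_term _ _ _ i (swap_mconj_clift _ _) (swap_mconj_clift _ _)
  set Zf : Matrix (Fin m ⊕ Fin m) (Fin p ⊕ Fin p) ℂ := (2⁻¹ : ℂ) • (Zt + Zc) with hZf
  have expandN : ∀ i, clift (N1 i) (N2 i) * Zf * clift F1 F2 ^ i
      = (2⁻¹ : ℂ) • (clift (N1 i) (N2 i) * Zt * clift F1 F2 ^ i)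
        + (2⁻¹ : ℂ) • (clift (N1 i) (N2 i) * Zc * clift F1 F2 ^ i) := by
    intro i
    rw [hZf, Matrix.mul_smul, Matrix.smul_mul, Matrix.mul_add, Matrix.add_mul, smul_add]
  have expandD : ∀ i, clift (D1 i) (D2 i) * Zf * clift F1 F2 ^ i
      = (2⁻¹ : ℂ) • (clift (D1 i) (D2 i) * Zt * clift F1 F2 ^ i)
        + (2⁻¹ : ℂ) • (clift (D1 i) (D2 i) * Zc * clift F1 F2 ^ i) := by
    intro i
    rw [hZf, Matrix.mul_smul, Matrix.smul_mul, Matrix.mul_add, Matrix.add_mul, smul_add]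
  have hXZf : clift X1 X2
      = ∑ i ∈ range (ω+1), clift (N1 i) (N2 i) * Zf * clift F1 F2 ^ i := by
    rw [Finset.sum_congr rfl (fun i _ => expandN i), Finset.sum_add_distrib,
      ← Finset.smul_sum, ← Finset.smul_sum, ← hXZ, ← hXZ2, ← smul_add, ← two_smul ℂ,
      smul_smul, inv_mul_cancel₀ (by norm_num : (2:ℂ) ≠ 0), one_smul]
  have hYZf : clift Y1 Y2
      = ∑ i ∈ range (ω+1), clift (D1 i) (D2 i) * Zf * clift F1 F2 ^ i := by
    rw [Finset.sum_congr rfl (fun i _ => expandD i), Finset.sum_add_distrib,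
      ← Finset.smul_sum, ← Finset.smul_sum, ← hYZ, ← hYZ2, ← smul_add, ← two_smul ℂ,
      smul_smul, inv_mul_cancel₀ (by norm_num : (2:ℂ) ≠ 0), one_smul]
  have hsym : swapM (Fin m) * mconj Zf * swapM (Fin p) = Zf := by
    have hc2 : (starRingEnd ℂ) (2⁻¹ : ℂ) = 2⁻¹ := by
      rw [map_inv₀, Complex.conj_ofNat]
    have hcanc : swapM (Fin m) * (swapM (Fin m) * Zt * swapM (Fin p)) * swapM (Fin p) = Zt := by
      simp only [Matrix.mul_assoc]
      rw [swap_swap_cancel, swapM_mul_self, Matrix.mul_one]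
    rw [hZf, mconj_smul, hc2, Matrix.mul_smul, Matrix.smul_mul, mconj_add, hZc,
      mconj_mul, mconj_mul, mconj_swapM, mconj_swapM, mconj_mconj]
    rw [Matrix.mul_add, Matrix.add_mul]
    rw [hcanc]
    rw [add_comm]
  obtain ⟨Z1, Z2, hZ12⟩ := exists_clift_of_symm Zf hsym
  refine ⟨Z1, Z2, ?_, ?_⟩
  · rw [← hZ12]; exact hXZf
  · rw [← hZ12]; exact hYZf
end

section
/- Let N_{1i}, N_{2i} ∈ ℂ^{n×m} and D_{1i}, D_{2i} ∈ ℂ^{m×m} (i = 0,…,ω) be coefficient families, and define N_{±i} := N_{1i} ± N_{2i}^#, D_{±i} := D_{1i} ± D_{2i}^#. Write N_j(s) := Σ_i N_{ji}s^i, N_j^#(s) := Σ_i N_{ji}^# s^i, etc. Then for every s ∈ ℂ, the (2n+2m)×2m block matrix [[N_1(s), N_2^#(s)],[D_1(s), D_2^#(s)],[N_2(s), N_1^#(s)],[D_2(s), D_1^#(s)]] has rank 2m if and only if the (2n+2m)×2m block matrix [[N_+(s), -N_-(s)],[D_+(s), -D_-(s)],[N_+^#(s), N_-^#(s)],[D_+^#(s),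 D_-^#(s)]] has rank 2m. -/
open Matrix Finset

/-- Evaluation of the polynomial matrix with coefficients `N 0, …, N ω` at `s`. -/
noncomputable def polyEval {n m : Type*} (ω : ℕ) (N : ℕ → Matrix n m ℂ) (s : ℂ) :
    Matrix n m ℂ :=
  ∑ i ∈ range (ω + 1), s ^ i • N i

/-- A `(2n+2m) × 2m` matrix built from four block rows, each with two column blocks. -/
noncomputable def stack4 {n m : ℕ}
    (a b : Matrix (Fin n) (Fin m) ℂ) (c d : Matrix (Fin m) (Fin m) ℂ)
    (e f : Matrix (Fin n) (Fin m) ℂ) (g h : Matrix (Fin m) (Fin m) ℂ) :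
    Matrix ((Fin n ⊕ Fin m) ⊕ (Fin n ⊕ Fin m)) (Fin m ⊕ Fin m) ℂ :=
  Matrix.fromRows
    (Matrix.fromRows (Matrix.fromCols a b) (Matrix.fromCols c d))
    (Matrix.fromRows (Matrix.fromCols e f) (Matrix.fromCols g h))

lemma polyEval_add {n m : Type*} (ω : ℕ) (X Y : ℕ → Matrix n m ℂ) (s : ℂ) :
    polyEval ω (fun i => X i + Y i) s = polyEval ω X s + polyEval ω Y s := by
  simp [polyEval, smul_add, Finset.sum_add_distrib]

lemma polyEval_sub {n m : Type*} (ω : ℕ) (X Y : ℕ → Matrix n m ℂ) (s : ℂ) :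
    polyEval ω (fun i => X i - Y i) s = polyEval ω X s - polyEval ω Y s := by
  simp [polyEval, smul_sub, Finset.sum_sub_distrib]

lemma mconj_add_s5 {n m : Type*} (X Y : Matrix n m ℂ) :
    mconj (X + Y) = mconj X + mconj Y := by
  ext i j; simp [mconj]

lemma mconj_sub {n m : Type*} (X Y : Matrix n m ℂ) :
    mconj (X - Y) = mconj X - mconj Y := by
  ext i j; simp [mconj]

lemma mconj_mconj_s5 {n m : Type*} (X : Matrix n m ℂ) : mconj (mconj X) = X := by
  ext i j; simp [mconj]

/-- the coupled right-coprimeness rank condition holds iff the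
decoupled one holds. -/
theorem stmt_5 {n m : ℕ} (ω : ℕ)
    (N1 N2 Np Nm : ℕ → Matrix (Fin n) (Fin m) ℂ)
    (D1 D2 Dp Dm : ℕ → Matrix (Fin m) (Fin m) ℂ)
    (hNp : ∀ i, Np i = N1 i + mconj (N2 i)) (hNm : ∀ i, Nm i = N1 i - mconj (N2 i))
    (hDp : ∀ i, Dp i = D1 i + mconj (D2 i)) (hDm : ∀ i, Dm i = D1 i - mconj (D2 i))
    (s : ℂ) :
    (stack4
        (polyEval ω N1 s) (polyEval ω (fun i => mconj (N2 i)) s)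
        (polyEval ω D1 s) (polyEval ω (fun i => mconj (D2 i)) s)
        (polyEval ω N2 s) (polyEval ω (fun i => mconj (N1 i)) s)
        (polyEval ω D2 s) (polyEval ω (fun i => mconj (D1 i)) s)).rank = 2 * m
    ↔
    (stack4
        (polyEval ω Np s) (-(polyEval ω Nm s))
        (polyEval ω Dp s) (-(polyEval ω Dm s))
        (polyEval ω (fun i => mconj (Np i)) s) (polyEval ω (fun i => mconj (Nm i)) s)
        (polyEval ω (fun i => mconj (Dp i)) s) (polyEval ω (fun i => mconj (Dm i)) s)).rank
      = 2 * m := by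
  set Q : Matrix (Fin m ⊕ Fin m) (Fin m ⊕ Fin m) ℂ :=
    Matrix.fromBlocks 1 (-1) 1 1 with hQdef
  have hQ : IsUnit Q.det := by
    rw [hQdef, Matrix.det_fromBlocks_one₁₁]
    have : (1 : Matrix (Fin m) (Fin m) ℂ) - 1 * (-1) = (2 : ℂ) • 1 := by
      ext i j
      by_cases h : i = j <;> simp [Matrix.one_apply, h] <;> norm_num
    rw [this, Matrix.det_smul]
    simp
  have hNpe : polyEval ω Np s
      = polyEval ω N1 s + polyEval ω (fun i => mconj (N2 i)) s := by
    rw [show Np = fun i => N1 i + mconj (N2 i) from funext hNp, polyEval_add]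
  have hNme : polyEval ω Nm s
      = polyEval ω N1 s - polyEval ω (fun i => mconj (N2 i)) s := by
    rw [show Nm = fun i => N1 i - mconj (N2 i) from funext hNm, polyEval_sub]
  have hDpe : polyEval ω Dp s
      = polyEval ω D1 s + polyEval ω (fun i => mconj (D2 i)) s := by
    rw [show Dp = fun i => D1 i + mconj (D2 i) from funext hDp, polyEval_add]
  have hDme : polyEval ω Dm s
      = polyEval ω D1 s - polyEval ω (fun i => mconj (D2 i)) s := by
    rw [show Dm = fun i => D1 i - mconj (D2 i) from funext hDm, polyEval_sub]
  have hNpc : polyEval ω (fun i => mconj (Np i)) s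
      = polyEval ω N2 s + polyEval ω (fun i => mconj (N1 i)) s := by
    rw [show (fun i => mconj (Np i)) = fun i => N2 i + mconj (N1 i) from
      funext fun i => by rw [hNp i, mconj_add_s5, mconj_mconj_s5, add_comm], polyEval_add]
  have hNmc : polyEval ω (fun i => mconj (Nm i)) s
      = polyEval ω (fun i => mconj (N1 i)) s - polyEval ω N2 s := by
    rw [show (fun i => mconj (Nm i)) = fun i => mconj (N1 i) - N2 i from
      funext fun i => by rw [hNm i, mconj_sub, mconj_mconj_s5], polyEval_sub]
  have hDpc : polyEval ω (fun i => mconj (Dp i)) s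
      = polyEval ω D2 s + polyEval ω (fun i => mconj (D1 i)) s := by
    rw [show (fun i => mconj (Dp i)) = fun i => D2 i + mconj (D1 i) from
      funext fun i => by rw [hDp i, mconj_add_s5, mconj_mconj_s5, add_comm], polyEval_add]
  have hDmc : polyEval ω (fun i => mconj (Dm i)) s
      = polyEval ω (fun i => mconj (D1 i)) s - polyEval ω D2 s := by
    rw [show (fun i => mconj (Dm i)) = fun i => mconj (D1 i) - D2 i from
      funext fun i => by rw [hDm i, mconj_sub, mconj_mconj_s5], polyEval_sub]
  have key :
      (stack4
        (polyEval ω Np s) (-(polyEval ω Nm s))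
        (polyEval ω Dp s) (-(polyEval ω Dm s))
        (polyEval ω (fun i => mconj (Np i)) s) (polyEval ω (fun i => mconj (Nm i)) s)
        (polyEval ω (fun i => mconj (Dp i)) s) (polyEval ω (fun i => mconj (Dm i)) s))
      = (stack4
        (polyEval ω N1 s) (polyEval ω (fun i => mconj (N2 i)) s)
        (polyEval ω D1 s) (polyEval ω (fun i => mconj (D2 i)) s)
        (polyEval ω N2 s) (polyEval ω (fun i => mconj (N1 i)) s)
        (polyEval ω D2 s) (polyEval ω (fun i => mconj (D1 i)) s)) * Q := by
    unfold stack4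
    rw [hQdef]
    simp only [Matrix.fromRows_mul, Matrix.fromCols_mul_fromBlocks,
      Matrix.mul_one, Matrix.mul_neg]
    rw [hNpe, hNme, hDpe, hDme, hNpc, hNmc, hDpc, hDmc]
    congr 2 <;> congr 1 <;> abel
  rw [key, Matrix.rank_mul_eq_left_of_isUnit_det Q _ hQ]
end

section
/- Let N_{0i} ∈ ℂ^{n×m} and D_{0i} ∈ ℂ^{m×m} (i = 0,…,ω) be coefficient families, with N_0(s) := Σ_i N_{0i}s^i, N_0^#(s) := Σ_i N_{0i}^# s^i (similarly for D_0). Define N_1(s) := (1/2)(N_0(s) + N_0(-s)), N_2(s) := ((1/2)(N_0(s) - N_0(-s)))^#, D_1(s) := (1/2)(D_0(s) + D_0(-s)), D_2(s) := ((1/2)(D_0(s) - D_0(-s)))^#, where for a polynomial matrix P(s) = Σ P_i s^i the notation P^#(s) means Σ P_i^# s^i. Then for every s ∈ ℂ, the (2n+2m)×2m block matrix [[N_1(s), N_2^#(s)],[D_1(s), D_2^#(s)],[N_2(s), N_1^#(s)],[D_2(s), D_1^#(s)]] has rank 2m if and only if the (2n+2m)×2m block matrix [[N_0(s), -N_0(-s)],[D_0(s),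 -D_0(-s)],[N_0^#(s), N_0^#(-s)],[D_0^#(s), D_0^#(-s)]] has rank 2m. -/
open Matrix Finset

lemma key_mul {n m : ℕ}
    (a b : Matrix (Fin n) (Fin m) ℂ) (c d : Matrix (Fin m) (Fin m) ℂ)
    (e f : Matrix (Fin n) (Fin m) ℂ) (g h : Matrix (Fin m) (Fin m) ℂ) :
    @HMul.hMul _ _ _ Matrix.instHMulOfFintypeOfMulOfAddCommMonoid (stack4 a b c d e f g h)
      (Matrix.fromBlocks ((1/2 : ℂ) • 1) ((1/2 : ℂ) • 1)
        (-((1/2 : ℂ) • 1)) ((1/2 : ℂ) • 1)) =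
    stack4 ((1/2 : ℂ) • (a - b)) ((1/2 : ℂ) • (a + b))
      ((1/2 : ℂ) • (c - d)) ((1/2 : ℂ) • (c + d))
      ((1/2 : ℂ) • (e - f)) ((1/2 : ℂ) • (e + f))
      ((1/2 : ℂ) • (g - h)) ((1/2 : ℂ) • (g + h)) := by
  simp only [stack4, Matrix.fromRows_mul, Matrix.fromCols_mul_fromBlocks,
    Matrix.mul_smul, Matrix.mul_one, Matrix.mul_neg, smul_add, smul_sub]
  congr 2 <;> abel

/-- the right-coprimeness rank condition for the bimatrix factorization
built from `N0, D0` is equivalent to the anti-right-coprimeness rank condition. -/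
theorem stmt_9 {n m : ℕ} (ω : ℕ)
    (N0 : ℕ → Matrix (Fin n) (Fin m) ℂ) (D0 : ℕ → Matrix (Fin m) (Fin m) ℂ)
    (s : ℂ) :
    (stack4
        ((1/2 : ℂ) • (polyEval ω N0 s + polyEval ω N0 (-s)))
        ((1/2 : ℂ) • (polyEval ω N0 s - polyEval ω N0 (-s)))
        ((1/2 : ℂ) • (polyEval ω D0 s + polyEval ω D0 (-s)))
        ((1/2 : ℂ) • (polyEval ω D0 s - polyEval ω D0 (-s)))
        ((1/2 : ℂ) • (polyEval ω (fun i => mconj (N0 i)) s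
          - polyEval ω (fun i => mconj (N0 i)) (-s)))
        ((1/2 : ℂ) • (polyEval ω (fun i => mconj (N0 i)) s
          + polyEval ω (fun i => mconj (N0 i)) (-s)))
        ((1/2 : ℂ) • (polyEval ω (fun i => mconj (D0 i)) s
          - polyEval ω (fun i => mconj (D0 i)) (-s)))
        ((1/2 : ℂ) • (polyEval ω (fun i => mconj (D0 i)) s
          + polyEval ω (fun i => mconj (D0 i)) (-s)))).rank = 2 * m
    ↔
    (stack4
        (polyEval ω N0 s) (-(polyEval ω N0 (-s)))
        (polyEval ω D0 s) (-(polyEval ω D0 (-s)))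
        (polyEval ω (fun i => mconj (N0 i)) s) (polyEval ω (fun i => mconj (N0 i)) (-s))
        (polyEval ω (fun i => mconj (D0 i)) s) (polyEval ω (fun i => mconj (D0 i)) (-s))).rank
      = 2 * m := by
  have hT : IsUnit (Matrix.fromBlocks ((1/2 : ℂ) • (1 : Matrix (Fin m) (Fin m) ℂ))
      ((1/2 : ℂ) • 1) (-((1/2 : ℂ) • 1))
      ((1/2 : ℂ) • (1 : Matrix (Fin m) (Fin m) ℂ))).det := by
    apply Matrix.isUnit_det_of_right_inverse
      (B := Matrix.fromBlocks (1 : Matrix (Fin m) (Fin m) ℂ) (-1) 1 1)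
    rw [Matrix.fromBlocks_multiply]
    norm_num [Matrix.smul_mul, ← Matrix.fromBlocks_one, smul_smul]
    rw [← Matrix.fromBlocks_one]
    congr 1 <;> · rw [← two_smul ℂ, smul_smul]; norm_num
  have := key_mul (polyEval ω N0 s) (-(polyEval ω N0 (-s)))
      (polyEval ω D0 s) (-(polyEval ω D0 (-s)))
      (polyEval ω (fun i => mconj (N0 i)) s) (polyEval ω (fun i => mconj (N0 i)) (-s))
      (polyEval ω (fun i => mconj (D0 i)) s) (polyEval ω (fun i => mconj (D0 i)) (-s))
  rw [show ∀ X Y : Matrix (Fin n) (Fin m) ℂ, X - -Y = X + Y from fun X Y => by abel,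
    show ∀ X Y : Matrix (Fin n) (Fin m) ℂ, X + -Y = X - Y from fun X Y => by abel,
    show ∀ X Y : Matrix (Fin m) (Fin m) ℂ, X - -Y = X + Y from fun X Y => by abel,
    show ∀ X Y : Matrix (Fin m) (Fin m) ℂ, X + -Y = X - Y from fun X Y => by abel] at this
  rw [← this, Matrix.rank_mul_eq_left_of_isUnit_det _ _ hT]
end
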